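/- Every point (x̂, ŷ) ∈ S²_{P,R} over Δ² with ŷ₁ > 0 is a convex combination of the point ((0,1),(0,1)) ∈ S² and the point ((ŷ₁/x̂₁, (x̂₁-ŷ₁)/x̂₁), (ŷ₁²/x̂₁², (ŷ₁-x̂₁)²/x̂₁²)) ∈ S², with weights 1 - x̂₁²/ŷ₁ and x̂₁²/ŷ₁ respectively. -/

import Mathlib

/-!
With `λ = x̂₁² / ŷ₁`, the first coordinates match because `λ · ŷ₁ / x̂₁ = x̂₁` and
`λ · ŷ₁² / x̂₁² = ŷ₁`. The second coordinates then match as well: for `x` this is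
`x̂₁ + x̂₂ = 1`, and for `y` it is the relation `x̂₁ - ŷ₁ = x̂₂ - ŷ₂` defining `S²_{P,R}`.
-/

lemma mem_stdSimplex_fin_two_iff {R : Type*} [Semiring R] [PartialOrder R] (v : Fin 2 → R) :
    v ∈ stdSimplex R (Fin 2) ↔ 0 ≤ v 0 ∧ 0 ≤ v 1 ∧ v 0 + v 1 = 1 := by
  simp only [stdSimplex, Set.mem_ofPred_eq, Fin.forall_fin_two, Fin.sum_univ_two, and_assoc]

lemma vec2_div_mem_stdSimplex {K : Type*} [Field K] [LinearOrder K] [IsStrictOrderedRing K]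
    {a b : K} (ha : 0 < a) (hb : 0 ≤ b) (hba : b ≤ a) :
    ![b / a, (a - b) / a] ∈ stdSimplex K (Fin 2) := by
  refine (mem_stdSimplex_fin_two_iff _).2 ⟨?_, ?_, ?_⟩ <;>
    simp only [Matrix.cons_val_zero, Matrix.cons_val_one]
  · exact div_nonneg hb ha.le
  · exact div_nonneg (sub_nonneg.2 hba) ha.le
  · field_simp
    ring

section

variable {K : Type*} [Field K]

lemma vec2_div_sq_eq_sq (a b : K) (j : Fin 2) :
    ![b ^ 2 / a ^ 2, (b - a) ^ 2 / a ^ 2] j = ![b / a, (a - b) / a] j ^ 2 := by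
  fin_cases j
  · exact (div_pow b a 2).symm
  · simp only [Fin.mk_one, Matrix.cons_val_one, Matrix.cons_val_zero, div_pow]
    ring

lemma vec2_eq_one_sub_smul_add_smul_of_add_eq_one {a b c : K} (hb : b ≠ 0) (hac : a + c = 1) :
    ![a, c] = (1 - a ^ 2 / b) • ![0, 1] + (a ^ 2 / b) • ![b / a, (a - b) / a] := by
  rw [Matrix.smul_vec2, Matrix.smul_vec2, Matrix.vec2_add]
  refine Matrix.vec2_eq ?_ ?_ <;> simp only [smul_eq_mul] <;> field_simp
  · ring
  · linear_combination b * hac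

lemma vec2_eq_one_sub_smul_add_smul_of_sub_eq_sub {a b c d : K} (ha : a ≠ 0) (hb : b ≠ 0)
    (hac : a + c = 1) (hR : a - b = c - d) :
    ![b, d] = (1 - a ^ 2 / b) • ![0, 1] + (a ^ 2 / b) • ![b ^ 2 / a ^ 2, (b - a) ^ 2 / a ^ 2] := by
  rw [Matrix.smul_vec2, Matrix.smul_vec2, Matrix.vec2_add]
  refine Matrix.vec2_eq ?_ ?_ <;> simp only [smul_eq_mul] <;> field_simp
  · ring
  · linear_combination b * hac + b * hR

end

/-- Every point (xh,yh) ∈ S²_{P,R} with yh₁ > 0 is the convex combination, with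
    weights 1 - xh₁²/yh₁ and xh₁²/yh₁, of the point ((0,1),(0,1)) ∈ S² and the
    point ((yh₁/xh₁, (xh₁-yh₁)/xh₁), (yh₁²/xh₁², (yh₁-xh₁)²/xh₁²)) ∈ S². -/
theorem stmt10 (xh yh : Fin 2 → ℝ)
    (hΔ : xh ∈ stdSimplex ℝ (Fin 2))
    (hP : ∀ j, xh j ^ 2 ≤ yh j ∧ yh j ≤ xh j)
    (hR : xh 0 - yh 0 = xh 1 - yh 1)
    (hy : 0 < yh 0) :
    let lam : ℝ := xh 0 ^ 2 / yh 0
    let x₀ : Fin 2 → ℝ := ![0, 1]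
    let y₀ : Fin 2 → ℝ := ![0, 1]
    let xt : Fin 2 → ℝ := ![yh 0 / xh 0, (xh 0 - yh 0) / xh 0]
    let yt : Fin 2 → ℝ := ![yh 0 ^ 2 / xh 0 ^ 2, (yh 0 - xh 0) ^ 2 / xh 0 ^ 2]
    (x₀ ∈ stdSimplex ℝ (Fin 2) ∧ ∀ j, y₀ j = x₀ j ^ 2) ∧
    (xt ∈ stdSimplex ℝ (Fin 2) ∧ ∀ j, yt j = xt j ^ 2) ∧
    xh = (1 - lam) • x₀ + lam • xt ∧
    yh = (1 - lam) • y₀ + lam • yt := by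
  intro lam x₀ y₀ xt yt
  have hyx : yh 0 ≤ xh 0 := (hP 0).2
  have hx : 0 < xh 0 := hy.trans_le hyx
  have hsum : xh 0 + xh 1 = 1 := ((mem_stdSimplex_fin_two_iff xh).1 hΔ).2.2
  have hxh : xh = ![xh 0, xh 1] := List.ofFn_inj.mp rfl
  have hyh : yh = ![yh 0, yh 1] := List.ofFn_inj.mp rfl
  refine ⟨⟨?_, ?_⟩, ⟨vec2_div_mem_stdSimplex hx hy.le hyx, vec2_div_sq_eq_sq _ _⟩, ?_, ?_⟩
  · exact (mem_stdSimplex_fin_two_iff _).2 (by norm_num [x₀])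
  · simp [Fin.forall_fin_two, x₀, y₀]
  · rw [hxh]
    exact vec2_eq_one_sub_smul_add_smul_of_add_eq_one hy.ne' hsum
  · rw [hyh]
    exact vec2_eq_one_sub_smul_add_smul_of_sub_eq_sub hx.ne' hy.ne' hsum hR
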